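/- Let X be a nonempty type, A a nonempty finite type, and γ a real with 0 < γ < 1. Let p and p̄ be transition kernels on X, let c_max ≥ 0, and let ĉ : X → A → ℝ satisfy 0 ≤ ĉ x a ≤ c_max for all x, a. Suppose ∑_{x'} |p x a x' − p̄ x a x'| ≤ α for all x, a. Let J be a bounded Bellman solution for (ĉ, p) and J̄ a bounded Bellman solution for (ĉ, p̄). Let Φ be an aggregation map on X and V a quantized Bellman solution for (ĉ, p̄, Φ), and suppose ε ≥ 0 satisfies: for all x, x' with Φ x = Φ x', |J̄ x − J̄ x'| ≤ ε. Then for every x, |V (Φ x) − J x| ≤ ε/(1−γ) + γ·α·c_max/(1−γ)². -/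

import Mathlib

open scoped BigOperators
open Function

section helpers
variable {X : Type*}

lemma geom_bound {u : X → ℝ} {γ K : ℝ} (hγ0 : 0 ≤ γ) (hγ1 : γ < 1)
    (hbdd : ∃ M, ∀ x, |u x| ≤ M)
    (hstep : ∀ M, (∀ x, |u x| ≤ M) → ∀ x, |u x| ≤ K + γ * M) :
    ∀ x, |u x| ≤ K / (1 - γ) := by
  obtain ⟨M₀, hM₀⟩ := hbdd
  set L : ℝ := K / (1 - γ) with hL
  have h1γ : 0 < 1 - γ := by linarith
  have hLfix : K + γ * L = L := by rw [hL]; field_simp; ring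
  set Δ : ℝ := max 0 (M₀ - L) with hΔ
  have hΔ0 : 0 ≤ Δ := le_max_left _ _
  have hM₀L : M₀ ≤ L + Δ := by
    have : M₀ - L ≤ Δ := le_max_right _ _
    linarith
  have key : ∀ n : ℕ, ∀ x, |u x| ≤ L + γ ^ n * Δ := by
    intro n
    induction n with
    | zero =>
      intro x
      simp only [pow_zero, one_mul]
      linarith [hM₀ x]
    | succ n ih =>
      intro x
      calc |u x| ≤ K + γ * (L + γ ^ n * Δ) := hstep _ ih x
        _ = (K + γ * L) + γ ^ (n + 1) * Δ := by ring
        _ = L + γ ^ (n + 1) * Δ := by rw [hLfix]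
  intro x
  have htend : Filter.Tendsto (fun n : ℕ => L + γ ^ n * Δ) Filter.atTop (nhds (L + 0 * Δ)) :=
    Filter.Tendsto.add tendsto_const_nhds
      ((tendsto_pow_atTop_nhds_zero_of_lt_one hγ0 hγ1).mul tendsto_const_nhds)
  rw [show L + 0 * Δ = L by ring] at htend
  exact ge_of_tendsto htend (Filter.Eventually.of_forall fun n => key n x)

lemma abs_inf'_sub_inf'_le {A : Type*} {s : Finset A} (hs : s.Nonempty) (f g : A → ℝ)
    {d : ℝ} (h : ∀ a ∈ s, |f a - g a| ≤ d) :
    |s.inf' hs f - s.inf' hs g| ≤ d := by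
  rw [abs_le]
  obtain ⟨af, haf, hf⟩ := s.exists_mem_eq_inf' hs f
  obtain ⟨ag, hag, hg⟩ := s.exists_mem_eq_inf' hs g
  constructor
  · have h1 : s.inf' hs g ≤ g af := Finset.inf'_le _ haf
    have h2 := (abs_le.1 (h af haf)).1
    rw [hf]; linarith
  · have h1 : s.inf' hs f ≤ f ag := Finset.inf'_le _ hag
    have h2 := (abs_le.1 (h ag hag)).2
    rw [hg]; linarith

lemma kernel_exp_abs_le {q : X → ℝ} (hq0 : ∀ x, 0 ≤ q x) (hqf : (support q).Finite)
    (hq1 : (∑ᶠ x, q x) = 1) {w : X → ℝ} {D : ℝ} (hw : ∀ x, |w x| ≤ D) :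
    |∑ᶠ x, q x * w x| ≤ D := by
  have hcoe : (↑hqf.toFinset : Set X) = support q := hqf.coe_toFinset
  have hsub : support (fun x => q x * w x) ⊆ ↑hqf.toFinset := by
    rw [hcoe]; exact fun x hx => left_ne_zero_of_mul hx
  rw [finsum_eq_sum_of_support_subset _ hsub]
  have hq1' : (∑ x ∈ hqf.toFinset, q x) = 1 := by
    rw [← finsum_eq_sum_of_support_subset _ (le_of_eq hcoe.symm : support q ⊆ _)]
    exact hq1
  calc |∑ x ∈ hqf.toFinset, q x * w x| ≤ ∑ x ∈ hqf.toFinset, |q x * w x| :=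
        Finset.abs_sum_le_sum_abs _ _
    _ ≤ ∑ x ∈ hqf.toFinset, q x * D := by
        refine Finset.sum_le_sum fun x _ => ?_
        rw [abs_mul, abs_of_nonneg (hq0 x)]
        exact mul_le_mul_of_nonneg_left (hw x) (hq0 x)
    _ = D := by rw [← Finset.sum_mul, hq1', one_mul]

lemma kernel_exp_sub_le {q : X → ℝ} (hq0 : ∀ x, 0 ≤ q x) (hqf : (support q).Finite)
    (hq1 : (∑ᶠ x, q x) = 1) {u v : X → ℝ} {D : ℝ} (hw : ∀ x, |u x - v x| ≤ D) :
    |(∑ᶠ x, q x * u x) - ∑ᶠ x, q x * v x| ≤ D := by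
  have hcoe : (↑hqf.toFinset : Set X) = support q := hqf.coe_toFinset
  have h1 : support (fun x => q x * u x) ⊆ ↑hqf.toFinset := by
    rw [hcoe]; exact fun x hx => left_ne_zero_of_mul hx
  have h2 : support (fun x => q x * v x) ⊆ ↑hqf.toFinset := by
    rw [hcoe]; exact fun x hx => left_ne_zero_of_mul hx
  have h3 : support (fun x => q x * (u x - v x)) ⊆ ↑hqf.toFinset := by
    rw [hcoe]; exact fun x hx => left_ne_zero_of_mul hx
  have hdiff : (∑ᶠ x, q x * u x) - (∑ᶠ x, q x * v x) = ∑ᶠ x, q x * (u x - v x) := by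
    rw [finsum_eq_sum_of_support_subset _ h1, finsum_eq_sum_of_support_subset _ h2,
      finsum_eq_sum_of_support_subset _ h3, ← Finset.sum_sub_distrib]
    exact Finset.sum_congr rfl fun x _ => by ring
  rw [hdiff]
  exact kernel_exp_abs_le hq0 hqf hq1 hw

lemma kernel_misspec {q q' : X → ℝ} (hqf : (support q).Finite) (hq'f : (support q').Finite)
    {u : X → ℝ} {M β : ℝ} (hM : 0 ≤ M) (hu : ∀ x, |u x| ≤ M)
    (hβ : (∑ᶠ x, |q x - q' x|) ≤ β) :
    |(∑ᶠ x, q x * u x) - ∑ᶠ x, q' x * u x| ≤ β * M := by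
  classical
  set t : Finset X := hqf.toFinset ∪ hq'f.toFinset with ht
  have hqsub : support q ⊆ ↑t := by
    intro x hx
    simp only [ht, Finset.coe_union, Set.Finite.coe_toFinset, Set.mem_union]
    exact Or.inl hx
  have hq'sub : support q' ⊆ ↑t := by
    intro x hx
    simp only [ht, Finset.coe_union, Set.Finite.coe_toFinset, Set.mem_union]
    exact Or.inr hx
  have h1 : support (fun x => q x * u x) ⊆ ↑t := fun x hx =>
    hqsub (left_ne_zero_of_mul hx)
  have h2 : support (fun x => q' x * u x) ⊆ ↑t := fun x hx =>
    hq'sub (left_ne_zero_of_mul hx)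
  have h3 : support (fun x => |q x - q' x|) ⊆ ↑t := by
    intro x hx
    simp only [mem_support, ne_eq, abs_eq_zero, sub_eq_zero] at hx
    by_contra hxt
    have hq0 : q x = 0 := by by_contra h; exact hxt (hqsub h)
    have hq'0 : q' x = 0 := by by_contra h; exact hxt (hq'sub h)
    exact hx (by rw [hq0, hq'0])
  have hβ' : (∑ x ∈ t, |q x - q' x|) ≤ β := by
    rw [← finsum_eq_sum_of_support_subset _ h3]; exact hβ
  rw [finsum_eq_sum_of_support_subset _ h1, finsum_eq_sum_of_support_subset _ h2,
    ← Finset.sum_sub_distrib]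
  calc |∑ x ∈ t, (q x * u x - q' x * u x)| ≤ ∑ x ∈ t, |q x * u x - q' x * u x| :=
        Finset.abs_sum_le_sum_abs _ _
    _ ≤ ∑ x ∈ t, |q x - q' x| * M := by
        refine Finset.sum_le_sum fun x _ => ?_
        rw [← sub_mul, abs_mul]
        exact mul_le_mul_of_nonneg_left (hu x) (abs_nonneg _)
    _ = (∑ x ∈ t, |q x - q' x|) * M := by rw [Finset.sum_mul]
    _ ≤ β * M := mul_le_mul_of_nonneg_right hβ' hM

lemma regroup (Φ : X → X) (hΦr : (Set.range Φ).Finite) (q : X → ℝ)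
    (hq : (Function.support q).Finite) (V : X → ℝ) :
    (∑ᶠ (y') (_ : y' ∈ Set.range Φ), (∑ᶠ (x') (_ : Φ x' = y'), q x') * V y')
      = ∑ᶠ x', q x' * V (Φ x') := by
  classical
  set s : Finset X := hq.toFinset with hs
  set T : Finset X := hΦr.toFinset with hT
  have hinner : ∀ y', (∑ᶠ (x') (_ : Φ x' = y'), q x')
      = ∑ x' ∈ s.filter (fun x' => Φ x' = y'), q x' := by
    intro y'
    apply finsum_cond_eq_sum_of_cond_iff
    intro x hx
    simp only [Finset.mem_filter, hs, Set.Finite.mem_toFinset, mem_support]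
    exact ⟨fun h => ⟨hx, h⟩, fun h => h.2⟩
  have houter : (∑ᶠ (y') (_ : y' ∈ Set.range Φ), (∑ᶠ (x') (_ : Φ x' = y'), q x') * V y')
      = ∑ y' ∈ T, (∑ᶠ (x') (_ : Φ x' = y'), q x') * V y' := by
    apply finsum_cond_eq_sum_of_cond_iff
    intro y' _
    simp [hT, Set.Finite.mem_toFinset]
  rw [houter]
  have hmaps : ∀ x' ∈ s, Φ x' ∈ T := fun x' _ => by
    simp [hT, Set.Finite.mem_toFinset]
  calc (∑ y' ∈ T, (∑ᶠ (x') (_ : Φ x' = y'), q x') * V y')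
      = ∑ y' ∈ T, ∑ x' ∈ s.filter (fun x' => Φ x' = y'), q x' * V y' := by
        refine Finset.sum_congr rfl fun y' _ => ?_
        rw [hinner, Finset.sum_mul]
    _ = ∑ y' ∈ T, ∑ x' ∈ s.filter (fun x' => Φ x' = y'), q x' * V (Φ x') := by
        refine Finset.sum_congr rfl fun y' _ => Finset.sum_congr rfl fun x' hx' => ?_
        rw [(Finset.mem_filter.1 hx').2]
    _ = ∑ x' ∈ s, q x' * V (Φ x') := Finset.sum_fiberwise_of_maps_to hmaps _
    _ = ∑ᶠ x', q x' * V (Φ x') := by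
        refine (finsum_eq_sum_of_support_subset _ ?_).symm
        intro x hx
        simp only [hs, Set.Finite.coe_toFinset]
        exact left_ne_zero_of_mul hx

end helpers

/-- A transition kernel on state space `X` with action space `A`. -/
def IsKernel {X A : Type*} (p : X → A → X → ℝ) : Prop :=
  ∀ x a, (∀ x', 0 ≤ p x a x') ∧ (Function.support (p x a)).Finite ∧ (∑ᶠ x', p x a x') = 1

/-- `J` is a bounded Bellman solution for cost `c`, kernel `p`, discount `γ`. -/
def IsBellman {X A : Type*} [Fintype A] [Nonempty A] (γ : ℝ)
    (c : X → A → ℝ) (p : X → A → X → ℝ) (J : X → ℝ) : Prop :=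
  (∃ M, ∀ x, |J x| ≤ M) ∧
  ∀ x, J x = Finset.univ.inf' Finset.univ_nonempty
      (fun a => c x a + γ * ∑ᶠ x', p x a x' * J x')

/-- An aggregation map: finite range and idempotent. -/
def IsAggregation {X : Type*} (Φ : X → X) : Prop :=
  (Set.range Φ).Finite ∧ Φ ∘ Φ = Φ

/-- `V` is a quantized Bellman solution for `(c, p, Φ)`: on the set of
representative states (the range of `Φ`), `V` satisfies the Bellman equation
of the quantized MDP whose kernel is `p̂ y a y' = ∑_{x' : Φ x' = y'} p y a x'`. -/
def IsQuantBellman {X A : Type*} [Fintype A] [Nonempty A] (γ : ℝ)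
    (c : X → A → ℝ) (p : X → A → X → ℝ) (Φ : X → X) (V : X → ℝ) : Prop :=
  ∀ y ∈ Set.range Φ, V y = Finset.univ.inf' Finset.univ_nonempty
      (fun a => c y a + γ * ∑ᶠ (y') (_ : y' ∈ Set.range Φ),
        (∑ᶠ (x') (_ : Φ x' = y'), p y a x') * V y')

/-- Sub-optimality bound of MOBAL: quantization error plus misspecification error. -/
theorem mobal_suboptimality_bound
    {X A : Type*} [Nonempty X] [Fintype A] [Nonempty A]
    (γ : ℝ) (hγ0 : 0 < γ) (hγ1 : γ < 1)
    (p pbar : X → A → X → ℝ) (hp : IsKernel p) (hpbar : IsKernel pbar)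
    (cmax : ℝ) (hcmax : 0 ≤ cmax)
    (c : X → A → ℝ) (hc : ∀ x a, 0 ≤ c x a ∧ c x a ≤ cmax)
    (α : ℝ) (hα : ∀ x a, (∑ᶠ x', |p x a x' - pbar x a x'|) ≤ α)
    (J Jbar : X → ℝ)
    (hJ : IsBellman γ c p J) (hJbar : IsBellman γ c pbar Jbar)
    (Φ : X → X) (hΦ : IsAggregation Φ)
    (V : X → ℝ) (hV : IsQuantBellman γ c pbar Φ V)
    (ε : ℝ) (hε0 : 0 ≤ ε)
    (hε : ∀ x x', Φ x = Φ x' → |Jbar x - Jbar x'| ≤ ε) :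
    ∀ x, |V (Φ x) - J x| ≤ ε / (1 - γ) + γ * α * cmax / (1 - γ) ^ 2 := by
  classical
  have h1γ : 0 < 1 - γ := by linarith
  have hα0 : 0 ≤ α := by
    obtain ⟨x₀⟩ := (inferInstance : Nonempty X)
    obtain ⟨a₀⟩ := (inferInstance : Nonempty A)
    exact le_trans (finsum_nonneg fun x' => abs_nonneg _) (hα x₀ a₀)
  set MJb : ℝ := cmax / (1 - γ) with hMJb
  have hMJb0 : 0 ≤ MJb := div_nonneg hcmax h1γ.le
  -- Step 1: |Jbar| ≤ cmax / (1 - γ)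
  have hJbarBound : ∀ x, |Jbar x| ≤ MJb := by
    apply geom_bound hγ0.le hγ1 hJbar.1
    intro M hM x
    rw [hJbar.2 x]
    have hM0 : 0 ≤ M := le_trans (abs_nonneg _) (hM x)
    have hbnd : ∀ a ∈ (Finset.univ : Finset A),
        |(c x a + γ * ∑ᶠ x', pbar x a x' * Jbar x') - (0 : ℝ)| ≤ cmax + γ * M := by
      intro a _
      obtain ⟨h0, hf, h1⟩ := hpbar x a
      have hS := kernel_exp_abs_le h0 hf h1 hM
      rw [sub_zero]
      calc |c x a + γ * ∑ᶠ x', pbar x a x' * Jbar x'|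
          ≤ |c x a| + |γ * ∑ᶠ x', pbar x a x' * Jbar x'| := abs_add_le _ _
        _ ≤ cmax + γ * M := by
            rw [abs_mul, abs_of_nonneg hγ0.le, abs_of_nonneg (hc x a).1]
            exact add_le_add (hc x a).2 (mul_le_mul_of_nonneg_left hS hγ0.le)
    have := abs_inf'_sub_inf'_le Finset.univ_nonempty
      (fun a => c x a + γ * ∑ᶠ x', pbar x a x' * Jbar x') (fun _ => (0 : ℝ)) hbnd
    rw [Finset.inf'_const, sub_zero] at this
    exact this
  -- Step 2: |J - Jbar| ≤ γ α MJb / (1 - γ)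
  have hJsub : ∀ x, |J x - Jbar x| ≤ γ * (α * MJb) / (1 - γ) := by
    apply geom_bound hγ0.le hγ1
    · obtain ⟨M1, hM1⟩ := hJ.1
      obtain ⟨M2, hM2⟩ := hJbar.1
      exact ⟨M1 + M2, fun x => by
        calc |J x - Jbar x| ≤ |J x| + |Jbar x| := abs_sub _ _
          _ ≤ M1 + M2 := add_le_add (hM1 x) (hM2 x)⟩
    · intro M hM x
      rw [hJ.2 x, hJbar.2 x]
      rw [add_comm (γ * (α * MJb)) (γ * M)]
      apply abs_inf'_sub_inf'_le Finset.univ_nonempty _ _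
      intro a _
      obtain ⟨hp0, hpf, hp1⟩ := hp x a
      obtain ⟨hq0, hqf, hq1⟩ := hpbar x a
      have e1 : (c x a + γ * ∑ᶠ x', p x a x' * J x')
          - (c x a + γ * ∑ᶠ x', pbar x a x' * Jbar x')
          = γ * ((∑ᶠ x', p x a x' * J x') - ∑ᶠ x', pbar x a x' * Jbar x') := by ring
      rw [e1, abs_mul, abs_of_nonneg hγ0.le]
      have h2 : |(∑ᶠ x', p x a x' * J x') - ∑ᶠ x', pbar x a x' * Jbar x'|
          ≤ M + α * MJb := by
        calc |(∑ᶠ x', p x a x' * J x') - ∑ᶠ x', pbar x a x' * Jbar x'|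
            ≤ |(∑ᶠ x', p x a x' * J x') - ∑ᶠ x', p x a x' * Jbar x'|
              + |(∑ᶠ x', p x a x' * Jbar x') - ∑ᶠ x', pbar x a x' * Jbar x'| :=
              abs_sub_le _ _ _
          _ ≤ M + α * MJb := by
              apply add_le_add
              · exact kernel_exp_sub_le hp0 hpf hp1 hM
              · exact kernel_misspec hpf hqf hMJb0 hJbarBound (hα x a)
      calc γ * |(∑ᶠ x', p x a x' * J x') - ∑ᶠ x', pbar x a x' * Jbar x'|
          ≤ γ * (M + α * MJb) := mul_le_mul_of_nonneg_left h2 hγ0.le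
        _ = γ * M + γ * (α * MJb) := by ring
  -- Step 3: quantization error
  set T : Finset X := hΦ.1.toFinset with hT
  have hΦΦ : ∀ x, Φ (Φ x) = Φ x := fun x => congrFun hΦ.2 x
  have hTne : T.Nonempty := by
    obtain ⟨x₀⟩ := (inferInstance : Nonempty X)
    exact ⟨Φ x₀, by simp [hT, Set.Finite.mem_toFinset]⟩
  set D : ℝ := T.sup' hTne (fun y => |V y - Jbar y|) with hD
  have hpoint : ∀ x', |V (Φ x') - Jbar x'| ≤ D + ε := by
    intro x'
    have hmem : Φ x' ∈ T := by simp [hT, Set.Finite.mem_toFinset]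
    have h1 : |V (Φ x') - Jbar (Φ x')| ≤ D :=
      Finset.le_sup' (fun y => |V y - Jbar y|) hmem
    have h2 : |Jbar (Φ x') - Jbar x'| ≤ ε := hε (Φ x') x' (hΦΦ x')
    calc |V (Φ x') - Jbar x'|
        ≤ |V (Φ x') - Jbar (Φ x')| + |Jbar (Φ x') - Jbar x'| := abs_sub_le _ _ _
      _ ≤ D + ε := add_le_add h1 h2
  have hkey : ∀ y ∈ T, |V y - Jbar y| ≤ γ * (D + ε) := by
    intro y hy
    have hyr : y ∈ Set.range Φ := by
      rw [hT, Set.Finite.mem_toFinset] at hy; exact hy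
    rw [hV y hyr, hJbar.2 y]
    apply abs_inf'_sub_inf'_le Finset.univ_nonempty _ _
    intro a _
    obtain ⟨hq0, hqf, hq1⟩ := hpbar y a
    have hre := regroup Φ hΦ.1 (pbar y a) hqf V
    have e1 : (c y a + γ * ∑ᶠ (y') (_ : y' ∈ Set.range Φ),
          (∑ᶠ (x') (_ : Φ x' = y'), pbar y a x') * V y')
        - (c y a + γ * ∑ᶠ x', pbar y a x' * Jbar x')
        = γ * ((∑ᶠ x', pbar y a x' * V (Φ x')) - ∑ᶠ x', pbar y a x' * Jbar x') := by
      rw [hre]; ring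
    rw [e1, abs_mul, abs_of_nonneg hγ0.le]
    exact mul_le_mul_of_nonneg_left
      (kernel_exp_sub_le hq0 hqf hq1 (fun x' => hpoint x')) hγ0.le
  have hDle : D ≤ γ * ε / (1 - γ) := by
    obtain ⟨y₀, hy₀, hDy₀⟩ := T.exists_mem_eq_sup' hTne (fun y => |V y - Jbar y|)
    have h' : D ≤ γ * (D + ε) :=
      calc D = |V y₀ - Jbar y₀| := hD.trans hDy₀
        _ ≤ γ * (D + ε) := hkey y₀ hy₀
    rw [le_div_iff₀ h1γ]
    nlinarith
  -- Conclusion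
  intro x
  have hphix : Φ (Φ x) = Φ x := hΦΦ x
  have h1 : |V (Φ x) - Jbar x| ≤ D + ε := hpoint x
  have h2 : |Jbar x - J x| ≤ γ * (α * MJb) / (1 - γ) := by
    rw [abs_sub_comm]; exact hJsub x
  have hEeq : γ * (α * MJb) / (1 - γ) = γ * α * cmax / (1 - γ) ^ 2 := by
    rw [hMJb]; field_simp
  have hεeq : γ * ε / (1 - γ) + ε = ε / (1 - γ) := by
    field_simp; ring
  calc |V (Φ x) - J x| ≤ |V (Φ x) - Jbar x| + |Jbar x - J x| := abs_sub_le _ _ _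
    _ ≤ (D + ε) + γ * (α * MJb) / (1 - γ) := add_le_add h1 h2
    _ ≤ (γ * ε / (1 - γ) + ε) + γ * α * cmax / (1 - γ) ^ 2 := by
        rw [← hEeq]; exact add_le_add (add_le_add hDle le_rfl) le_rfl
    _ = ε / (1 - γ) + γ * α * cmax / (1 - γ) ^ 2 := by rw [hεeq]
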